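/- McDiarmid's bounded differences inequality: if X_1,...,X_n are independent random variables and f is a function such that changing the i-th coordinate changes the value of f by at most c_i, then for any ε > 0, P(|f(X_1,...,X_n) − E[f(X_1,...,X_n)]| > ε) < 2·exp(−ε² / ∑_i c_i²). -/

import Mathlib

/-!
Reveal the coordinates one at a time. Integrating out the first coordinate of `f` leaves a
function of the remaining ones with the same bounded differences, and for fixed values of the
remaining coordinates the deviation of `f` from this partial mean is a centred variable
confined to an interval of length `c₀`; by Hoeffding's lemma it is sub-Gaussian with parameter
`c₀² / 4`.
Sub-Gaussian parameters add along such a product decomposition, so under the product of the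
laws, which for independent `Xᵢ` is their joint law, `f − E f` is sub-Gaussian with parameter
`∑ cᵢ² / 4`. The Chernoff bound then gives `exp (-2 ε² / ∑ cᵢ²)` for each tail.
-/

open MeasureTheory Real
open scoped NNReal

lemma exists_forall_mem_Icc_of_abs_sub_le {α : Type*} {g : α → ℝ} {c : ℝ}
    (h : ∀ x y, |g x - g y| ≤ c) : ∃ a, ∀ x, g x ∈ Set.Icc a (a + c) := by
  rcases isEmpty_or_nonempty α with hα | hα
  · exact ⟨0, isEmptyElim⟩
  obtain ⟨x₀⟩ := id hα
  have hbdd : BddBelow (Set.range g) :=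
    ⟨g x₀ - c, by rintro _ ⟨y, rfl⟩; linarith [(abs_le.mp (h x₀ y)).2]⟩
  refine ⟨⨅ x, g x, fun x => ⟨ciInf_le hbdd x, ?_⟩⟩
  have : g x - c ≤ ⨅ y, g y := le_ciInf fun y => by linarith [(abs_le.mp (h x y)).2]
  linarith

namespace ProbabilityTheory

section

variable {α β : Type*} [MeasurableSpace α] [MeasurableSpace β]
  {μ : Measure α} {ν : Measure β} {g : α → ℝ}

lemma integrable_of_abs_sub_le [IsFiniteMeasure μ] (hg : AEMeasurable g μ) {c : ℝ}
    (h : ∀ x y, |g x - g y| ≤ c) : Integrable g μ :=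
  let ⟨a, ha⟩ := exists_forall_mem_Icc_of_abs_sub_le h
  .of_mem_Icc a (a + c) hg (ae_of_all _ ha)

lemma hasSubgaussianMGF_sub_integral_of_abs_sub_le [IsProbabilityMeasure μ]
    (hg : AEMeasurable g μ) {c : ℝ≥0} (h : ∀ x y, |g x - g y| ≤ c) :
    HasSubgaussianMGF (fun x => g x - μ[g]) ((c / 2) ^ 2) μ := by
  obtain ⟨a, ha⟩ := exists_forall_mem_Icc_of_abs_sub_le h
  simpa using hasSubgaussianMGF_of_mem_Icc hg (ae_of_all _ ha)

lemma HasSubgaussianMGF.prod_add [SFinite μ] [SFinite ν] {Z : α × β → ℝ} {Y : β → ℝ}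
    {c₁ c₂ : ℝ≥0} (hZ : Measurable Z) (hY : Measurable Y)
    (hZs : ∀ y, HasSubgaussianMGF (fun x => Z (x, y)) c₁ μ)
    (hYs : HasSubgaussianMGF Y c₂ ν) :
    HasSubgaussianMGF (fun p => Z p + Y p.2) (c₁ + c₂) (μ.prod ν) := by
  have hsection (t : ℝ) (y : β) :
      ∫ x, exp (t * (Z (x, y) + Y y)) ∂μ = mgf (fun x => Z (x, y)) μ t * exp (t * Y y) := by
    simp_rw [mul_add, exp_add, mgf, integral_mul_const]
  have hint (t : ℝ) : Integrable (fun p => exp (t * (Z p + Y p.2))) (μ.prod ν) := by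
    refine (integrable_prod_iff' (by fun_prop)).2 ⟨ae_of_all _ fun y => ?_, ?_⟩
    · simp_rw [mul_add, exp_add]
      exact ((hZs y).integrable_exp_mul t).mul_const _
    have hmeas : Measurable fun p : α × β => ‖exp (t * (Z p + Y p.2))‖ := by fun_prop
    refine ((hYs.integrable_exp_mul t).const_mul (exp (c₁ * t ^ 2 / 2))).mono'
      hmeas.stronglyMeasurable.integral_prod_left'.aestronglyMeasurable (ae_of_all _ fun y => ?_)
    simp_rw [norm_of_nonneg (exp_nonneg _), norm_of_nonneg (integral_nonneg fun _ => exp_nonneg _),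
      hsection]
    gcongr
    exact (hZs y).mgf_le t
  refine ⟨hint, fun t => ?_⟩
  calc mgf (fun p => Z p + Y p.2) (μ.prod ν) t
      = ∫ y, mgf (fun x => Z (x, y)) μ t * exp (t * Y y) ∂ν := by
        rw [mgf, integral_prod_symm _ (hint t)]
        simp_rw [hsection]
    _ ≤ ∫ y, exp (c₁ * t ^ 2 / 2) * exp (t * Y y) ∂ν :=
        integral_mono_of_nonneg (ae_of_all _ fun y => mul_nonneg mgf_nonneg (exp_nonneg _))
          ((hYs.integrable_exp_mul t).const_mul _)
          (ae_of_all _ fun y => mul_le_mul_of_nonneg_right ((hZs y).mgf_le t) (exp_nonneg _))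
    _ = exp (c₁ * t ^ 2 / 2) * mgf Y ν t := integral_const_mul _ _
    _ ≤ exp (c₁ * t ^ 2 / 2) * exp (c₂ * t ^ 2 / 2) := by gcongr; exact hYs.mgf_le t
    _ = exp (↑(c₁ + c₂) * t ^ 2 / 2) := by rw [← exp_add]; push_cast; ring_nf

lemma hasSubgaussianMGF_sub_integral_prod [IsProbabilityMeasure μ] [IsFiniteMeasure ν]
    {F : α × β → ℝ} (hF : Measurable F) {c₁ c₂ : ℝ≥0}
    (hsection : ∀ x x' y, |F (x, y) - F (x', y)| ≤ c₁)
    (hmarginal : HasSubgaussianMGF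
      (fun y => ∫ x, F (x, y) ∂μ - ∫ y', ∫ x, F (x, y') ∂μ ∂ν) c₂ ν) :
    HasSubgaussianMGF (fun p => F p - ∫ q, F q ∂(μ.prod ν)) ((c₁ / 2) ^ 2 + c₂)
      (μ.prod ν) := by
  set M := ∫ y', ∫ x, F (x, y') ∂μ ∂ν
  have hmeas : Measurable fun y => ∫ x, F (x, y) ∂μ :=
    hF.stronglyMeasurable.integral_prod_left'.measurable
  have h := HasSubgaussianMGF.prod_add (Z := fun p => F p - ∫ x, F (x, p.2) ∂μ)
    (hF.sub (hmeas.comp measurable_snd)) (hmeas.sub_const M)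
    (fun y => hasSubgaussianMGF_sub_integral_of_abs_sub_le (by fun_prop) (hsection · · y))
    hmarginal
  simp only [sub_add_sub_cancel] at h
  have hM : ∫ q, F q ∂(μ.prod ν) = M :=
    integral_prod_symm F ((h.integrable.add (integrable_const M)).congr
      (ae_of_all _ fun _ => sub_add_cancel _ _))
  rwa [hM]

end

theorem hasSubgaussianMGF_sub_integral_pi {n : ℕ} {E : Fin n → Type*}
    [∀ i, MeasurableSpace (E i)] (ν : ∀ i, Measure (E i)) [∀ i, IsProbabilityMeasure (ν i)]
    {f : (∀ i, E i) → ℝ} (hf : Measurable f) {c : Fin n → ℝ≥0}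
    (hc : ∀ i x y, |f x - f (Function.update x i y)| ≤ c i) :
    HasSubgaussianMGF (fun x => f x - ∫ y, f y ∂Measure.pi ν) (∑ i, (c i / 2) ^ 2)
      (Measure.pi ν) := by
  induction n with
  | zero =>
    have hconst : ∀ x, f x = f default := fun x => congrArg f (Subsingleton.elim _ _)
    simp [hconst]
  | succ n ih =>
    set e := MeasurableEquiv.piFinSuccAbove E 0
    have hF : Measurable (f ∘ e.symm) := hf.comp e.symm.measurable
    have hsection (x x' y) : |f (e.symm (x, y)) - f (e.symm (x', y))| ≤ c 0 := by
      have := hc 0 (Fin.insertNth 0 x y) x'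
      rwa [Fin.update_insertNth] at this
    have hintegrable (y) : Integrable (fun x => f (e.symm (x, y))) (ν 0) :=
      integrable_of_abs_sub_le (by fun_prop) (hsection · · y)
    have hmarginal := ih (fun j => ν (Fin.succAbove 0 j))
      (f := fun y => ∫ x, f (e.symm (x, y)) ∂ν 0)
      hF.stronglyMeasurable.integral_prod_left'.measurable
      (c := fun j => c (Fin.succAbove 0 j)) fun j y z => by
        rw [← integral_sub (hintegrable _) (hintegrable _)]
        simpa using norm_integral_le_of_norm_le_const (C := c (Fin.succAbove 0 j)) (μ := ν 0)
          (f := fun x => f (e.symm (x, y)) - f (e.symm (x, Function.update y j z)))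
          (ae_of_all _ fun x => by
            have := hc (Fin.succAbove 0 j) (Fin.insertNth 0 x y) z
            rwa [← Fin.insertNth_update] at this)
    have h := hasSubgaussianMGF_sub_integral_prod hF hsection hmarginal
    have hmap : (Measure.pi ν).map e = _ := (measurePreserving_piFinSuccAbove ν 0).map_eq
    rw [← hmap, e.measurableEmbedding.integral_map] at h
    convert h.of_map e.measurable.aemeasurable using 1
    · ext x
      simp only [Function.comp_apply, MeasurableEquiv.symm_apply_apply]
    · exact Fin.sum_univ_succAbove _ 0

lemma HasSubgaussianMGF.measureReal_abs_gt_lt {Ω : Type*} [MeasurableSpace Ω] {μ : Measure Ω}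
    [IsFiniteMeasure μ] {X : Ω → ℝ} {c : ℝ≥0} (h : HasSubgaussianMGF X c μ) {ε : ℝ}
    (hε : 0 < ε) : μ.real {ω | ε < |X ω|} < 2 * exp (-ε ^ 2 / (4 * c)) := by
  rcases eq_zero_or_pos c with rfl | hc
  -- the right-hand side is then `2 * exp 0` (division by zero), so strictness needs `X = 0` a.e.
  · have hnull : μ {ω | ε < |X ω|} = 0 := by
      refine measure_eq_zero_iff_ae_notMem.2 ?_
      filter_upwards [h.ae_eq_zero_of_hasSubgaussianMGF_zero] with ω hω
      simp [hω, hε.le]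
    simp [measureReal_def, hnull]
  have hsplit : {ω | ε < |X ω|} ⊆ {ω | ε ≤ X ω} ∪ {ω | ε ≤ (-X) ω} := by
    rintro ω (hω : ε < |X ω|)
    rcases lt_abs.1 hω with h | h
    exacts [Or.inl h.le, Or.inr h.le]
  calc μ.real {ω | ε < |X ω|}
      ≤ μ.real {ω | ε ≤ X ω} + μ.real {ω | ε ≤ (-X) ω} :=
        (measureReal_mono hsplit).trans (measureReal_union_le _ _)
    _ ≤ exp (-ε ^ 2 / (2 * c)) + exp (-ε ^ 2 / (2 * c)) :=
        add_le_add (h.measure_ge_le hε.le) (h.neg.measure_ge_le hε.le)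
    _ < 2 * exp (-ε ^ 2 / (4 * c)) := by
        have : 0 < ε ^ 2 / (4 * c) := by positivity
        rw [← two_mul, mul_lt_mul_iff_right₀ two_pos, exp_lt_exp,
          show -ε ^ 2 / (2 * c) = -ε ^ 2 / (4 * c) - ε ^ 2 / (4 * c) by ring]
        linarith

end ProbabilityTheory

/-- McDiarmid's bounded differences inequality: if `X_1, …, X_n` are
independent random variables and `f` changes by at most `c i` when the `i`-th
coordinate is changed, then for every `ε > 0`,
`P(|f(X) − E[f(X)]| > ε) < 2 exp(−ε² / ∑ c i²)`. -/
theorem mcdiarmid_inequality {n : ℕ} {Ω : Type*} [MeasurableSpace Ω]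
    (μ : Measure Ω) [IsProbabilityMeasure μ]
    {E : Fin n → Type*} [mE : ∀ i, MeasurableSpace (E i)]
    (X : ∀ i, Ω → E i) (hXm : ∀ i, Measurable (X i))
    (hXindep : ProbabilityTheory.iIndepFun X μ)
    (f : (∀ i, E i) → ℝ) (hf : Measurable f)
    (c : Fin n → ℝ)
    (hbdd : ∀ (i : Fin n) (x : ∀ j, E j) (x' : E i),
      |f x - f (Function.update x i x')| ≤ c i)
    (ε : ℝ) (hε : 0 < ε) :
    (μ { ω | ε < |f (fun i => X i ω) - ∫ ω', f (fun i => X i ω') ∂μ| }).toReal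
      < 2 * Real.exp (-ε ^ 2 / ∑ i, c i ^ 2) := by
  have : ∀ i, IsProbabilityMeasure (μ.map (X i)) :=
    fun i => Measure.isProbabilityMeasure_map (hXm i).aemeasurable
  have hX : AEMeasurable (fun ω i => X i ω) μ := (measurable_pi_lambda _ hXm).aemeasurable
  have hmap := (ProbabilityTheory.iIndepFun_iff_map_fun_eq_pi_map
    fun i => (hXm i).aemeasurable).1 hXindep
  have h := ProbabilityTheory.hasSubgaussianMGF_sub_integral_pi (fun i => μ.map (X i)) hf
    (c := fun i => ‖c i‖₊) fun i x y => (hbdd i x y).trans (le_abs_self _)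
  rw [← hmap, integral_map hX hf.aestronglyMeasurable] at h
  have hS : 4 * ((∑ i, (‖c i‖₊ / 2) ^ 2 : ℝ≥0) : ℝ) = ∑ i, c i ^ 2 := by
    push_cast
    rw [Finset.mul_sum]
    congr 1 with i
    rw [Real.norm_eq_abs, div_pow, sq_abs]
    ring
  have := (h.of_map hX).measureReal_abs_gt_lt hε
  rwa [hS] at this
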